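/- Let u : [s,T] × cl(ℝ^d_+) → ℝ be continuous, bounded, and C^{1,2} on (s,T] × ℝ^d_+, satisfying D_t u − 𝓐(t)u ≤ 0 in (s,T] × ℝ^d_+, u(s,·) ≤ 0 on ℝ^d_+, and u ≤ 0 on (s,T] × ∂ℝ^d_+, where 𝓐(t) = Tr(Q(t,x)D²) + ⟨b(t,x),∇⟩ − c(t,x) is uniformly elliptic with c ≥ 0 and admits a Lyapunov function φ(x) = 1+|x|² with 𝓐(t)φ ≤ λφ on [s,T]. Then u ≤ 0 on [s,T] × ℝ^d_+. -/

import Mathlib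

/-!
Fix `ε > 0` and `κ > λ` and put `v = u - ε e^{κ(t-s)} φ` with `φ(x) = 1 + |x|²`. As `u` is
bounded, `v < 0` for large `|x|`, so if `v` were positive somewhere it would attain a positive
maximum on `[s,T] × cl(ℝ^d_+)`, and the initial and boundary conditions put the maximum point in
`(s,T] × ℝ^d_+`. There `D_t v ≥ 0`, `∇v = 0` and `D²v ≤ 0`, hence `Tr(Q D²v) ≤ 0` as `Q ≥ 0`, and
with `c ≥ 0` and `𝓐φ ≤ λφ` the differential inequality gives
`0 ≥ D_t u - 𝓐u ≥ (κ - λ) ε e^{κ(t-s)} φ > 0`. So `u ≤ ε e^{κ(t-s)} φ` for every `ε > 0`.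
-/

open Set Matrix Filter Topology

theorem IsLocalMax.deriv_deriv_nonpos {g : ℝ → ℝ} {a : ℝ} (hmax : IsLocalMax g a)
    (hg : ContinuousAt g a) : deriv (deriv g) a ≤ 0 := by
  by_contra! hpos
  have hconst : g =ᶠ[𝓝 a] fun _ => g a :=
    ((isLocalMin_of_deriv_deriv_pos hpos hmax.deriv_eq_zero hg).and hmax).mono
      fun r hr => le_antisymm hr.2 hr.1
  have hderiv : deriv g =ᶠ[𝓝 a] fun _ => 0 :=
    hconst.eventuallyEq_nhds.mono fun r hr => by rw [hr.deriv_eq, deriv_const]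
  rw [hderiv.deriv_eq, deriv_const] at hpos
  exact hpos.false

section SecondOrder

variable {E : Type*} [NormedAddCommGroup E] [NormedSpace ℝ E]

theorem IsLocalMax.fderiv_fderiv_apply_self_nonpos {f : E → ℝ} {x : E} (hmax : IsLocalMax f x)
    (hf : ContDiffAt ℝ 2 f x) (ξ : E) : fderiv ℝ (fderiv ℝ f) x ξ ξ ≤ 0 := by
  have hdiff : ∀ᶠ y in 𝓝 x, DifferentiableAt ℝ f y :=
    (hf.eventually (by simp)).mono fun y hy => hy.differentiableAt (by simp)
  have hdiff' : DifferentiableAt ℝ (fderiv ℝ f) x :=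
    (hf.fderiv_right (m := 1) le_rfl).differentiableAt one_ne_zero
  set line : ℝ → E := fun r => x + r • ξ
  have hline : ∀ r, HasDerivAt line ξ r := fun r => by
    simpa [line] using ((hasDerivAt_id r).smul_const ξ).const_add x
  have hline0 : line 0 = x := by simp [line]
  have hline_tendsto : Tendsto line (𝓝 0) (𝓝 x) :=
    hline0 ▸ (hline 0).continuousAt.tendsto
  have hderiv : deriv (f ∘ line) =ᶠ[𝓝 0] fun r => fderiv ℝ f (line r) ξ :=
    (hline_tendsto.eventually hdiff).mono fun r hr =>
      (hr.hasFDerivAt.comp_hasDerivAt r (hline r)).deriv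
  have hderiv2 : HasDerivAt (fun r => fderiv ℝ f (line r) ξ) (fderiv ℝ (fderiv ℝ f) x ξ ξ) 0 :=
    (ContinuousLinearMap.apply ℝ ℝ ξ).hasFDerivAt.comp_hasDerivAt 0
      (hdiff'.hasFDerivAt.comp_hasDerivAt_of_eq 0 (hline 0) hline0.symm)
  have hmax' : IsLocalMax (f ∘ line) 0 :=
    (hline0 ▸ hmax).comp_continuous (hline 0).continuousAt
  have hcont : ContinuousAt (f ∘ line) 0 :=
    (hline0 ▸ hf.continuousAt).comp (hline 0).continuousAt
  simpa [(hderiv2.congr_of_eventuallyEq hderiv).deriv] using hmax'.deriv_deriv_nonpos hcont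

theorem IsLocalMax.fderiv_eq_of_sub {f g : E → ℝ} {x : E} (hmax : IsLocalMax (f - g) x)
    (hf : DifferentiableAt ℝ f x) (hg : DifferentiableAt ℝ g x) : fderiv ℝ f x = fderiv ℝ g x :=
  sub_eq_zero.1 (fderiv_sub hf hg ▸ hmax.fderiv_eq_zero)

theorem IsLocalMax.fderiv_fderiv_sub_apply_self_nonpos {f g : E → ℝ} {x : E}
    (hmax : IsLocalMax (f - g) x) (hf : ContDiffAt ℝ 2 f x) (hg : ContDiffAt ℝ 2 g x) (ξ : E) :
    (fderiv ℝ (fderiv ℝ f) x - fderiv ℝ (fderiv ℝ g) x) ξ ξ ≤ 0 := by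
  have hev : fderiv ℝ (f - g) =ᶠ[𝓝 x] fderiv ℝ f - fderiv ℝ g :=
    ((hf.eventually (by simp)).and (hg.eventually (by simp))).mono fun y hy =>
      fderiv_sub (hy.1.differentiableAt (by simp)) (hy.2.differentiableAt (by simp))
  have hf' := (hf.fderiv_right (m := 1) le_rfl).differentiableAt one_ne_zero
  have hg' := (hg.fderiv_right (m := 1) le_rfl).differentiableAt one_ne_zero
  rw [← fderiv_sub hf' hg', ← hev.fderiv_eq]
  exact hmax.fderiv_fderiv_apply_self_nonpos (hf.sub hg) ξ

end SecondOrder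

open scoped MatrixOrder in
theorem Matrix.PosSemidef.sum_mul_apply_nonpos {ι E : Type*} [Fintype ι] [NormedAddCommGroup E]
    [NormedSpace ℝ E] {Q : Matrix ι ι ℝ} (hQ : Q.PosSemidef) {B : E →L[ℝ] E →L[ℝ] ℝ}
    (hB : ∀ ξ, B ξ ξ ≤ 0) (e : ι → E) : ∑ i, ∑ j, Q i j * B (e i) (e j) ≤ 0 := by
  classical
  set S := CFC.sqrt Q
  have hSsymm : Sᵀ = S := (CFC.sqrt_nonneg Q).posSemidef.isHermitian
  have hS : ∀ i j, Q i j = ∑ k, S k i * S k j := fun i j => by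
    rw [← CFC.sqrt_mul_sqrt_self Q hQ.nonneg, mul_apply]
    exact Finset.sum_congr rfl fun k _ => by rw [← congrFun (congrFun hSsymm k) i]; rfl
  -- `Q = S S` with `S = √Q` symmetric, so the sum is `∑ₖ B vₖ vₖ` with `vₖ = ∑ᵢ Sₖᵢ eᵢ`
  calc ∑ i, ∑ j, Q i j * B (e i) (e j)
      = ∑ i, ∑ j, ∑ k, S k i * S k j * B (e i) (e j) := by simp only [hS, Finset.sum_mul]
    _ = ∑ i, ∑ k, ∑ j, S k i * S k j * B (e i) (e j) :=
        Finset.sum_congr rfl fun i _ => Finset.sum_comm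
    _ = ∑ k, ∑ i, ∑ j, S k i * S k j * B (e i) (e j) := Finset.sum_comm
    _ = ∑ k, B (∑ i, S k i • e i) (∑ j, S k j • e j) := by
        simp only [map_sum, map_smul, _root_.sum_apply, _root_.smul_apply,
          smul_eq_mul, Finset.mul_sum, mul_assoc]
        exact Finset.sum_congr rfl fun k _ => Finset.sum_comm.trans <|
          Finset.sum_congr rfl fun _ _ => Finset.sum_congr rfl fun _ _ => mul_left_comm _ _ _
    _ ≤ 0 := Finset.sum_nonpos fun k _ => hB _

theorem fderiv_fderiv_apply_eq_fderiv_apply {E F : Type*} [NormedAddCommGroup E]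
    [NormedSpace ℝ E] [NormedAddCommGroup F] [NormedSpace ℝ F] {f : E → F} {x : E}
    (hf : DifferentiableAt ℝ (fderiv ℝ f) x) (v w : E) :
    fderiv ℝ (fderiv ℝ f) x w v = fderiv ℝ (fun y => fderiv ℝ f y v) x w := by
  rw [fderiv_clm_apply hf (differentiableAt_const v)]
  simp

theorem contDiff_paraboloid {F : Type*} [NormedAddCommGroup F] [InnerProductSpace ℝ F]
    {n : WithTop ℕ∞} (A : ℝ) : ContDiff ℝ n fun z : F => A * (1 + ‖z‖ ^ 2) :=
  contDiff_const.mul (contDiff_const.add (contDiff_norm_sq ℝ))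

section Paraboloid

variable {ι : Type*} [Fintype ι] [DecidableEq ι] (A : ℝ)

theorem fderiv_paraboloid_single (y : EuclideanSpace ℝ ι) (j : ι) :
    fderiv ℝ (fun z : EuclideanSpace ℝ ι => A * (1 + ‖z‖ ^ 2)) y (EuclideanSpace.single j 1)
      = 2 * A * y j := by
  rw [(((hasStrictFDerivAt_norm_sq y).hasFDerivAt.const_add 1).const_mul A).fderiv]
  simp [EuclideanSpace.inner_single_right]
  ring

theorem fderiv_fderiv_paraboloid_single (x : EuclideanSpace ℝ ι) (i j : ι) :
    fderiv ℝ (fderiv ℝ fun z : EuclideanSpace ℝ ι => A * (1 + ‖z‖ ^ 2)) x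
      (EuclideanSpace.single i 1) (EuclideanSpace.single j 1) = if i = j then 2 * A else 0 := by
  rw [fderiv_fderiv_apply_eq_fderiv_apply
    (((contDiff_paraboloid A).fderiv_right (m := 1) le_rfl).differentiable one_ne_zero x)]
  simp only [fderiv_paraboloid_single]
  have h : HasFDerivAt (fun y : EuclideanSpace ℝ ι => 2 * A * y j)
      ((2 * A) • EuclideanSpace.proj j) x :=
    (EuclideanSpace.proj (𝕜 := ℝ) j).hasFDerivAt.const_mul (2 * A)
  rw [h.fderiv]
  simp [eq_comm]

variable {A} {f : EuclideanSpace ℝ ι → ℝ} {x : EuclideanSpace ℝ ι}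

theorem IsLocalMax.fderiv_single_eq_of_sub_paraboloid
    (hmax : IsLocalMax (fun z => f z - A * (1 + ‖z‖ ^ 2)) x) (hf : DifferentiableAt ℝ f x)
    (i : ι) : fderiv ℝ f x (EuclideanSpace.single i 1) = 2 * A * x i := by
  rw [hmax.fderiv_eq_of_sub hf ((contDiff_paraboloid A).differentiable two_ne_zero x),
    fderiv_paraboloid_single]

theorem IsLocalMax.sum_mul_fderiv_fderiv_le_of_sub_paraboloid
    (hmax : IsLocalMax (fun z => f z - A * (1 + ‖z‖ ^ 2)) x) (hf : ContDiffAt ℝ 2 f x)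
    {Q : Matrix ι ι ℝ} (hQ : Q.PosSemidef) :
    ∑ i, ∑ j, Q i j * fderiv ℝ (fun y => fderiv ℝ f y (EuclideanSpace.single j 1)) x
      (EuclideanSpace.single i 1) ≤ 2 * A * ∑ i, Q i i := by
  have h := hQ.sum_mul_apply_nonpos
    (hmax.fderiv_fderiv_sub_apply_self_nonpos hf (contDiff_paraboloid A).contDiffAt)
    fun i => EuclideanSpace.single i 1
  simp only [_root_.sub_apply, fderiv_fderiv_paraboloid_single, mul_sub, Finset.sum_sub_distrib,
    mul_ite, mul_zero, Finset.sum_ite_eq, Finset.mem_univ, if_true] at h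
  simp only [← fderiv_fderiv_apply_eq_fderiv_apply
    ((hf.fderiv_right (m := 1) le_rfl).differentiableAt one_ne_zero)]
  rw [← Finset.sum_mul] at h
  linarith

end Paraboloid

theorem IsLocalMaxOn.nonneg_of_hasDerivWithinAt {f : ℝ → ℝ} {s : Set ℝ} {a t f' : ℝ}
    (hmax : IsLocalMaxOn f s t) (hs : Ioc a t ⊆ s) (ha : a < t)
    (hf : HasDerivWithinAt f f' s t) : 0 ≤ f' := by
  have hcone : (a + t) / 2 - t ∈ posTangentConeAt s t := by
    refine sub_mem_posTangentConeAt_of_segment_subset ?_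
    rw [segment_symm, segment_eq_Icc (by linarith)]
    exact fun τ hτ => hs ⟨by linarith [hτ.1], hτ.2⟩
  have h := hmax.hasFDerivWithinAt_nonpos hf.hasFDerivWithinAt hcone
  simp only [ContinuousLinearMap.toSpanSingleton_apply, smul_eq_mul] at h
  nlinarith

theorem ContinuousOn.exists_isMaxOn_of_pos_subset {X : Type*} [TopologicalSpace X] {S K : Set X}
    {v : X → ℝ} (hv : ContinuousOn v S) (hS : IsClosed S) (hK : IsCompact K)
    (hSK : ∀ p ∈ S, 0 < v p → p ∈ K) {p₀ : X} (hp₀ : p₀ ∈ S) (hpos : 0 < v p₀) :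
    ∃ p ∈ S, IsMaxOn v S p := by
  refine hv.exists_isMaxOn' hS hp₀ ?_
  filter_upwards [mem_inf_of_left hK.compl_mem_cocompact, mem_inf_of_right (mem_principal_self S)]
    with p hpK hpS
  by_contra! h
  exact hpK (hSK p hpS (hpos.trans h))

theorem ContinuousOn.nonpos_of_forall_coord_pos {ι : Type*} [Fintype ι] [DecidableEq ι]
    {f : EuclideanSpace ℝ ι → ℝ} {i : ι} (hf : ContinuousOn f {x | 0 ≤ x i})
    (h : ∀ x, 0 < x i → f x ≤ 0) {x : EuclideanSpace ℝ ι} (hx : 0 ≤ x i) : f x ≤ 0 := by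
  set line : ℝ → EuclideanSpace ℝ ι := fun r => x + r • EuclideanSpace.single i 1
  have hline : ∀ r, line r i = x i + r := fun r => by simp [line]
  have htendsto : Tendsto line (𝓝[>] 0) (𝓝[{y | 0 ≤ y i}] x) := by
    refine tendsto_nhdsWithin_iff.2 ⟨?_, ?_⟩
    · have hcont : Continuous line := by fun_prop
      simpa [line] using (hcont.tendsto 0).mono_left nhdsWithin_le_nhds
    · filter_upwards [self_mem_nhdsWithin] with r (hr : 0 < r)
      simp only [hline]
      linarith
  refine le_of_tendsto ((hf x hx).tendsto.comp htendsto) ?_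
  filter_upwards [self_mem_nhdsWithin] with r (hr : 0 < r)
  exact h _ (by rw [hline]; linarith)

section Penalized

variable {E : Type*} [NormedAddCommGroup E] {u : ℝ → E → ℝ} {s T ε κ : ℝ} {C : Set E}

noncomputable def penalized (u : ℝ → E → ℝ) (s ε κ : ℝ) (p : ℝ × E) : ℝ :=
  u p.1 p.2 - ε * Real.exp (κ * (p.1 - s)) * (1 + ‖p.2‖ ^ 2)

theorem penalized_nonpos_of_nonpos {t : ℝ} {x : E} (hu : u t x ≤ 0) (hε : 0 ≤ ε) :
    penalized u s ε κ (t, x) ≤ 0 := by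
  have : 0 ≤ ε * Real.exp (κ * (t - s)) * (1 + ‖x‖ ^ 2) := by positivity
  simp only [penalized]
  linarith

theorem exists_isMaxOn_penalized [ProperSpace E] {M : ℝ} (hC : IsClosed C)
    (hu : ContinuousOn (fun p : ℝ × E => u p.1 p.2) (Icc s T ×ˢ C))
    (hM : ∀ t ∈ Icc s T, ∀ x ∈ C, u t x ≤ M) (hε : 0 < ε) (hκ : 0 ≤ κ) {p₀ : ℝ × E}
    (hp₀ : p₀ ∈ Icc s T ×ˢ C) (hpos : 0 < penalized u s ε κ p₀) :
    ∃ p ∈ Icc s T ×ˢ C, IsMaxOn (penalized u s ε κ) (Icc s T ×ˢ C) p := by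
  refine ContinuousOn.exists_isMaxOn_of_pos_subset (hu.sub (by fun_prop)) (isClosed_Icc.prod hC)
    ((isCompact_Icc (a := s) (b := T)).prod (isCompact_closedBall 0 (M / ε))) ?_ hp₀ hpos
  rintro ⟨t, x⟩ ⟨ht, hx⟩ hv
  refine ⟨ht, ?_⟩
  have hexp : 1 ≤ Real.exp (κ * (t - s)) := Real.one_le_exp (mul_nonneg hκ (sub_nonneg.2 ht.1))
  have hnorm : ‖x‖ ≤ 1 + ‖x‖ ^ 2 := by nlinarith [sq_nonneg (‖x‖ - 1)]
  have huM := hM t ht x hx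
  unfold penalized at hv
  rw [mem_closedBall_zero_iff, le_div_iff₀ hε]
  nlinarith [mul_le_mul_of_nonneg_left hexp hε.le]

theorem IsMaxOn.isLocalMax_penalized {t : ℝ} {x : E}
    (hmax : IsMaxOn (penalized u s ε κ) (Icc s T ×ˢ C) (t, x)) (ht : t ∈ Icc s T) (hC : C ∈ 𝓝 x) :
    IsLocalMax (fun y => u t y - ε * Real.exp (κ * (t - s)) * (1 + ‖y‖ ^ 2)) x := by
  filter_upwards [hC] with y hy using hmax (show (t, y) ∈ Icc s T ×ˢ C from ⟨ht, hy⟩)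

theorem IsMaxOn.le_derivWithin_penalized {t : ℝ} {x : E}
    (hmax : IsMaxOn (penalized u s ε κ) (Icc s T ×ˢ C) (t, x)) (ht : t ∈ Ioc s T) (hx : x ∈ C)
    (hu : DifferentiableWithinAt ℝ (fun τ => u τ x) (Ioc s T) t) :
    κ * (ε * Real.exp (κ * (t - s))) * (1 + ‖x‖ ^ 2)
      ≤ derivWithin (fun τ => u τ x) (Ioc s T) t := by
  have hmax' : IsLocalMaxOn (fun τ => penalized u s ε κ (τ, x)) (Ioc s T) t :=
    IsMaxOn.localize fun τ hτ => hmax (show (τ, x) ∈ Icc s T ×ˢ C from ⟨Ioc_subset_Icc_self hτ, hx⟩)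
  have hexp : HasDerivAt (fun τ => ε * Real.exp (κ * (τ - s)) * (1 + ‖x‖ ^ 2))
      (ε * (Real.exp (κ * (t - s)) * κ) * (1 + ‖x‖ ^ 2)) t := by
    refine ((((hasDerivAt_id' t).sub_const s).const_mul κ).exp.const_mul ε).mul_const _ |>.congr_deriv ?_
    ring
  have h := hmax'.nonneg_of_hasDerivWithinAt (Ioc_subset_Ioc_right ht.2) ht.1
    (hu.hasDerivWithinAt.sub hexp.hasDerivWithinAt)
  linarith

end Penalized

section HalfSpace

variable {ι : Type*} [Fintype ι] {i₀ : ι} {s T ε κ : ℝ} {u : ℝ → EuclideanSpace ℝ ι → ℝ}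

theorem exists_isMaxOn_penalized_halfSpace {M : ℝ}
    (hu_cont : ContinuousOn (fun p : ℝ × EuclideanSpace ℝ ι => u p.1 p.2)
      (Icc s T ×ˢ {x | 0 ≤ x i₀}))
    (hM : ∀ t ∈ Icc s T, ∀ x, 0 ≤ x i₀ → u t x ≤ M)
    (hinit : ∀ x, 0 ≤ x i₀ → u s x ≤ 0) (hbdry : ∀ t ∈ Ioc s T, ∀ x, x i₀ = 0 → u t x ≤ 0)
    (hε : 0 < ε) (hκ : 0 ≤ κ) {t : ℝ} {x : EuclideanSpace ℝ ι} (ht : t ∈ Icc s T)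
    (hx : 0 ≤ x i₀) (hpos : 0 < penalized u s ε κ (t, x)) :
    ∃ t₁ ∈ Ioc s T, ∃ x₁, 0 < x₁ i₀ ∧ 0 < penalized u s ε κ (t₁, x₁) ∧
      IsMaxOn (penalized u s ε κ) (Icc s T ×ˢ {x | 0 ≤ x i₀}) (t₁, x₁) := by
  obtain ⟨⟨t₁, x₁⟩, ⟨ht₁, hx₁⟩, hmax⟩ := exists_isMaxOn_penalized
    (isClosed_le continuous_const (EuclideanSpace.proj i₀).continuous) hu_cont hM hε hκ
    (show (t, x) ∈ _ from ⟨ht, hx⟩) hpos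
  have hv : 0 < penalized u s ε κ (t₁, x₁) := hpos.trans_le (hmax ⟨ht, hx⟩)
  have hst : s < t₁ := ht₁.1.lt_of_ne fun h : s = t₁ =>
    hv.not_ge (penalized_nonpos_of_nonpos (h ▸ hinit x₁ hx₁) hε.le)
  refine ⟨t₁, ⟨hst, ht₁.2⟩, x₁, (show 0 ≤ x₁ i₀ from hx₁).lt_of_ne fun h => ?_, hv, hmax⟩
  exact hv.not_ge (penalized_nonpos_of_nonpos (hbdry t₁ ⟨hst, ht₁.2⟩ x₁ h.symm) hε.le)

theorem penalized_nonpos_of_parabolic_subsolution [DecidableEq ι] {lam M : ℝ}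
    {Q : ℝ → EuclideanSpace ℝ ι → Matrix ι ι ℝ} {b : ℝ → EuclideanSpace ℝ ι → ι → ℝ}
    {c : ℝ → EuclideanSpace ℝ ι → ℝ}
    (hu_cont : ContinuousOn (fun p : ℝ × EuclideanSpace ℝ ι => u p.1 p.2)
      (Icc s T ×ˢ {x | 0 ≤ x i₀}))
    (hM : ∀ t ∈ Icc s T, ∀ x, 0 ≤ x i₀ → u t x ≤ M)
    (hu_x : ∀ t ∈ Ioc s T, ContDiffOn ℝ 2 (u t) {x | 0 < x i₀})
    (hu_t : ∀ t ∈ Ioc s T, ∀ x, 0 < x i₀ → DifferentiableWithinAt ℝ (fun τ => u τ x) (Ioc s T) t)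
    (hc : ∀ t x, 0 ≤ c t x) (hQ : ∀ t x, (Q t x).PosSemidef)
    (hLyap : ∀ t ∈ Icc s T, ∀ x : EuclideanSpace ℝ ι, 0 ≤ x i₀ →
      2 * (∑ i, Q t x i i) + 2 * (∑ i, b t x i * x i) - c t x * (1 + ‖x‖ ^ 2)
        ≤ lam * (1 + ‖x‖ ^ 2))
    (hineq : ∀ t ∈ Ioc s T, ∀ x, 0 < x i₀ →
      derivWithin (fun τ => u τ x) (Ioc s T) t
        - (∑ i, ∑ j, Q t x i j *
            fderiv ℝ (fun y => fderiv ℝ (u t) y (EuclideanSpace.single j 1)) x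
              (EuclideanSpace.single i 1))
        - (∑ i, b t x i * fderiv ℝ (u t) x (EuclideanSpace.single i 1))
        + c t x * u t x ≤ 0)
    (hinit : ∀ x, 0 ≤ x i₀ → u s x ≤ 0) (hbdry : ∀ t ∈ Ioc s T, ∀ x, x i₀ = 0 → u t x ≤ 0)
    (hε : 0 < ε) (hκ : lam < κ) (hκ₀ : 0 ≤ κ) :
    ∀ t ∈ Icc s T, ∀ x, 0 ≤ x i₀ → penalized u s ε κ (t, x) ≤ 0 := by
  intro t ht x hx
  by_contra! hpos
  obtain ⟨t₁, ht₁, x₁, hx₁, hv, hmax⟩ :=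
    exists_isMaxOn_penalized_halfSpace hu_cont hM hinit hbdry hε hκ₀ ht hx hpos
  have hopen : IsOpen {x : EuclideanSpace ℝ ι | 0 < x i₀} :=
    isOpen_lt continuous_const (EuclideanSpace.proj i₀).continuous
  have hloc := hmax.isLocalMax_penalized (Ioc_subset_Icc_self ht₁)
    (mem_of_superset (hopen.mem_nhds hx₁) fun y (hy : 0 < y i₀) => hy.le)
  have hC2 : ContDiffAt ℝ 2 (u t₁) x₁ := (hu_x t₁ ht₁).contDiffAt (hopen.mem_nhds hx₁)
  set A := ε * Real.exp (κ * (t₁ - s))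
  have hdt := hmax.le_derivWithin_penalized ht₁ hx₁.le (hu_t t₁ ht₁ x₁ hx₁)
  have hhess := hloc.sum_mul_fderiv_fderiv_le_of_sub_paraboloid hC2 (hQ t₁ x₁)
  have hgrad : ∑ i, b t₁ x₁ i * fderiv ℝ (u t₁) x₁ (EuclideanSpace.single i 1)
      = 2 * A * ∑ i, b t₁ x₁ i * x₁ i := by
    simp only [hloc.fderiv_single_eq_of_sub_paraboloid (hC2.differentiableAt two_ne_zero),
      Finset.mul_sum]
    exact Finset.sum_congr rfl fun i _ => by ring
  have hA : 0 < A := by positivity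
  have hLy := mul_le_mul_of_nonneg_left (hLyap t₁ (Ioc_subset_Icc_self ht₁) x₁ hx₁.le) hA.le
  have hcu : c t₁ x₁ * (A * (1 + ‖x₁‖ ^ 2)) ≤ c t₁ x₁ * u t₁ x₁ :=
    mul_le_mul_of_nonneg_left (by simp only [penalized] at hv; linarith) (hc t₁ x₁)
  have hgap : 0 < (κ - lam) * (A * (1 + ‖x₁‖ ^ 2)) := by positivity
  have := hineq t₁ ht₁ x₁ hx₁
  rw [hgrad] at this
  linarith

end HalfSpace

/-- Maximum principle in the half-space for the nonautonomous operator
`𝓐(t) = Tr(Q(t,x)D²) + ⟨b(t,x),∇⟩ − c(t,x)` with unbounded coefficients,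
`c ≥ 0`, under the Lyapunov condition for `φ(x) = 1 + |x|²`:
a bounded continuous subsolution which is nonpositive at the initial time and
on the lateral boundary is nonpositive everywhere. -/
theorem stmt_7 {n : ℕ} (s T : ℝ) (hsT : s < T)
    (u : ℝ → EuclideanSpace ℝ (Fin (n + 1)) → ℝ)
    (Q : ℝ → EuclideanSpace ℝ (Fin (n + 1)) → Matrix (Fin (n + 1)) (Fin (n + 1)) ℝ)
    (b : ℝ → EuclideanSpace ℝ (Fin (n + 1)) → Fin (n + 1) → ℝ)
    (c : ℝ → EuclideanSpace ℝ (Fin (n + 1)) → ℝ)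
    (lam : ℝ) (hlam : 0 < lam)
    -- continuity and boundedness of `u` on `[s,T] × cl(ℝ^d_+)`
    (hu_cont : ContinuousOn (fun p : ℝ × EuclideanSpace ℝ (Fin (n + 1)) => u p.1 p.2)
      (Icc s T ×ˢ {x | 0 ≤ x (Fin.last n)}))
    (hu_bdd : ∃ M, ∀ t ∈ Icc s T, ∀ x, 0 ≤ x (Fin.last n) → |u t x| ≤ M)
    -- `C^{1,2}` regularity on `(s,T] × ℝ^d_+`
    (hu_x : ∀ t ∈ Ioc s T, ContDiffOn ℝ 2 (u t) {x | 0 < x (Fin.last n)})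
    (hu_t : ∀ t ∈ Ioc s T, ∀ x, 0 < x (Fin.last n) →
      DifferentiableWithinAt ℝ (fun τ => u τ x) (Ioc s T) t)
    -- `c ≥ 0` and ellipticity of the symmetric matrix `Q`
    (hc : ∀ t x, 0 ≤ c t x)
    (hQsymm : ∀ t x, (Q t x).IsSymm)
    (hQpos : ∀ t x (ξ : Fin (n + 1) → ℝ), ξ ≠ 0 → 0 < ξ ⬝ᵥ (Q t x).mulVec ξ)
    -- Lyapunov condition `𝓐(t)φ ≤ λ φ` for `φ(x) = 1 + |x|²`
    (hLyap : ∀ t ∈ Icc s T, ∀ x : EuclideanSpace ℝ (Fin (n + 1)),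
      0 ≤ x (Fin.last n) →
      2 * (∑ i, Q t x i i) + 2 * (∑ i, b t x i * x i) - c t x * (1 + ‖x‖ ^ 2)
        ≤ lam * (1 + ‖x‖ ^ 2))
    -- the parabolic differential inequality `D_t u − 𝓐(t)u ≤ 0`
    (hineq : ∀ t ∈ Ioc s T, ∀ x, 0 < x (Fin.last n) →
      derivWithin (fun τ => u τ x) (Ioc s T) t
        - (∑ i, ∑ j, Q t x i j *
            fderiv ℝ (fun y => fderiv ℝ (u t) y (EuclideanSpace.single j 1)) x
              (EuclideanSpace.single i 1))
        - (∑ i, b t x i * fderiv ℝ (u t) x (EuclideanSpace.single i 1))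
        + c t x * u t x ≤ 0)
    -- initial and boundary conditions
    (hinit : ∀ x, 0 < x (Fin.last n) → u s x ≤ 0)
    (hbdry : ∀ t ∈ Ioc s T, ∀ x, x (Fin.last n) = 0 → u t x ≤ 0) :
    ∀ t ∈ Icc s T, ∀ x, 0 < x (Fin.last n) → u t x ≤ 0 := by
  obtain ⟨M, hM⟩ := hu_bdd
  have hQ : ∀ t x, (Q t x).PosSemidef := fun t x =>
    (posDef_iff_dotProduct_mulVec.2 ⟨isHermitian_iff_isSymm.2 (hQsymm t x),
      fun ξ hξ => by simpa using hQpos t x ξ hξ⟩).posSemidef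
  have hinit' : ∀ x, 0 ≤ x (Fin.last n) → u s x ≤ 0 := fun x hx =>
    (hu_cont.comp (Continuous.prodMk_right s).continuousOn
      fun y hy => ⟨left_mem_Icc.2 hsT.le, hy⟩).nonpos_of_forall_coord_pos hinit hx
  have hpen := fun ε hε => penalized_nonpos_of_parabolic_subsolution (ε := ε) (κ := lam + 1)
    hu_cont (fun t ht x hx => (le_abs_self _).trans (hM t ht x hx)) hu_x hu_t hc hQ hLyap hineq
    hinit' hbdry hε (lt_add_one lam) (by linarith)
  intro t ht x hx
  refine le_of_forall_pos_le_add fun δ hδ => ?_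
  have hφ : 0 < Real.exp ((lam + 1) * (t - s)) * (1 + ‖x‖ ^ 2) := by positivity
  have := hpen (δ / (Real.exp ((lam + 1) * (t - s)) * (1 + ‖x‖ ^ 2))) (by positivity) t ht x hx.le
  rw [penalized, mul_assoc, div_mul_cancel₀ _ hφ.ne'] at this
  linarith
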